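/- arXiv:2408.16001 — 4 statements merged into one kernel-verified Lean document; each statement's English description precedes it below -/
import Mathlib

section
/- Let b : ℝ → ℝ be a continuous 1-periodic function with ∫₀¹ b(s) ds = -α < 0. Let β ∈ (0, α), L > 0, and D > 0. Then the function Δ(t) = D·L·(∫_t^{t+1} exp(∫_s^{t+1} (b(x)+β) dx) ds) / (1 - exp(β-α)) is a 1-periodic, strictly positive solution of the ODE Δ'(t) = (b(t)+β)Δ(t) + D·L. Moreover, there exists D₀ > 0 such that for all D < D₀, max_{t∈[0,1]} Δ(t) < 1. -/
open Real MeasureTheory intervalIntegral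

/-- The candidate periodic solution of `Δ' = (b+β)Δ + D·L`. -/
noncomputable def DeltaSol (b : ℝ → ℝ) (α β L D : ℝ) (t : ℝ) : ℝ :=
  D * L * (∫ s in t..(t + 1), Real.exp (∫ x in s..(t + 1), (b x + β))) /
    (1 - Real.exp (β - α))

/-!
With `B` a primitive of `f = b + β`, the integral `F(t) = ∫_t^{t+1} exp (∫_s^{t+1} f)` equals
`exp (B (t+1)) · ∫_t^{t+1} exp (-B)`, so the product rule gives
`F' = f F + 1 - exp (∫_t^{t+1} f)`, and for 1-periodic `f` the last integral is the mean
`β - α < 0`. Thus `Δ = D L F / (1 - exp (β - α))` solves `Δ' = f Δ + D L`; it is periodic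
because `f` is, positive because the integrand is, and, being continuous, bounded on `[0, 1]`,
so `Δ < 1` there once `D` is small.
-/

noncomputable def windowExpIntegral (f : ℝ → ℝ) (T t : ℝ) : ℝ :=
  ∫ s in t..(t + T), Real.exp (∫ x in s..(t + T), f x)

section windowExpIntegral

variable {f : ℝ → ℝ} {T : ℝ}

theorem windowExpIntegral_add_period (hper : Function.Periodic f T) (t : ℝ) :
    windowExpIntegral f T (t + T) = windowExpIntegral f T t := by
  have hshift : ∀ s, (∫ x in (s + T)..(t + T + T), f x) = ∫ x in s..(t + T), f x := fun s => by
    rw [← integral_comp_add_right f T]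
    exact integral_congr fun x _ => hper x
  unfold windowExpIntegral
  rw [← integral_comp_add_right (fun s => Real.exp (∫ x in s..(t + T + T), f x)) T]
  simp only [hshift]

variable (hf : Continuous f)
include hf

theorem windowExpIntegral_eq_exp_mul_integral (T t : ℝ) :
    windowExpIntegral f T t =
      Real.exp (∫ x in (0 : ℝ)..(t + T), f x) *
        ∫ s in t..(t + T), Real.exp (-∫ x in (0 : ℝ)..s, f x) := by
  rw [windowExpIntegral, ← intervalIntegral.integral_const_mul]
  refine integral_congr fun s _ => ?_
  rw [← Real.exp_add, ← sub_eq_add_neg,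
    integral_interval_sub_left (hf.intervalIntegrable _ _) (hf.intervalIntegrable _ _)]

theorem windowExpIntegral_pos (hT : 0 < T) (t : ℝ) : 0 < windowExpIntegral f T t := by
  rw [windowExpIntegral_eq_exp_mul_integral hf]
  have hg : Continuous fun s => Real.exp (-∫ x in (0 : ℝ)..s, f x) :=
    (continuous_primitive (hf.intervalIntegrable) 0).neg.rexp
  exact mul_pos (Real.exp_pos _)
    (intervalIntegral_pos_of_pos (hg.intervalIntegrable _ _) (fun _ => Real.exp_pos _)
      (by linarith))

theorem hasDerivAt_windowExpIntegral (T t : ℝ) :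
    HasDerivAt (windowExpIntegral f T)
      (f (t + T) * windowExpIntegral f T t + 1 - Real.exp (∫ x in t..(t + T), f x)) t := by
  set B : ℝ → ℝ := fun u => ∫ x in (0 : ℝ)..u, f x
  have hB : ∀ u, HasDerivAt B (f u) u := fun u =>
    (hf.integral_hasStrictDerivAt 0 u).hasDerivAt
  have hg : Continuous fun s => Real.exp (-B s) :=
    (continuous_primitive hf.intervalIntegrable 0).neg.rexp
  set G : ℝ → ℝ := fun u => ∫ s in (0 : ℝ)..u, Real.exp (-B s)
  have hG : ∀ u, HasDerivAt G (Real.exp (-B u)) u := fun u =>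
    (hg.integral_hasStrictDerivAt 0 u).hasDerivAt
  have hF : windowExpIntegral f T = fun u => Real.exp (B (u + T)) * (G (u + T) - G u) := by
    funext u
    rw [windowExpIntegral_eq_exp_mul_integral hf,
      integral_interval_sub_left (hg.intervalIntegrable _ _) (hg.intervalIntegrable _ _)]
  have hexp : HasDerivAt (fun u => Real.exp (B (u + T)))
      (Real.exp (B (t + T)) * f (t + T)) t :=
    ((hB (t + T)).comp_add_const t T).exp
  have hdiff : HasDerivAt (fun u => G (u + T) - G u)
      (Real.exp (-B (t + T)) - Real.exp (-B t)) t :=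
    ((hG (t + T)).comp_add_const t T).sub (hG t)
  have hwindow : (∫ x in t..(t + T), f x) = B (t + T) + -B t :=
    (integral_interval_sub_left (hf.intervalIntegrable _ _) (hf.intervalIntegrable _ _)).symm
  have hval : f (t + T) * windowExpIntegral f T t + 1 - Real.exp (∫ x in t..(t + T), f x) =
      Real.exp (B (t + T)) * f (t + T) * (G (t + T) - G t) +
        Real.exp (B (t + T)) * (Real.exp (-B (t + T)) - Real.exp (-B t)) := by
    have hcancel : Real.exp (B (t + T)) * Real.exp (-B (t + T)) = 1 := by
      rw [← Real.exp_add, add_neg_cancel, Real.exp_zero]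
    rw [congrFun hF t, hwindow, Real.exp_add]
    linear_combination -hcancel
  rw [hval, hF]
  exact hexp.mul hdiff

theorem continuous_windowExpIntegral (T : ℝ) : Continuous (windowExpIntegral f T) :=
  continuous_iff_continuousAt.2 fun t => (hasDerivAt_windowExpIntegral hf T t).continuousAt

end windowExpIntegral

theorem exists_pos_forall_mul_lt_one_of_isCompact {X : Type*} [TopologicalSpace X]
    {K : Set X} {g : X → ℝ} (hK : IsCompact K) (hg : ContinuousOn g K) :
    ∃ D₀ > (0 : ℝ), ∀ D : ℝ, 0 < D → D < D₀ → ∀ x ∈ K, D * g x < 1 := by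
  obtain ⟨C, hC⟩ := hK.exists_bound_of_continuousOn hg
  refine ⟨1 / (|C| + 1), by positivity, fun D hD hDlt x hx => ?_⟩
  calc D * g x ≤ D * |C| :=
        mul_le_mul_of_nonneg_left ((le_abs_self _).trans ((hC x hx).trans (le_abs_self C))) hD.le
    _ < D * (|C| + 1) := by gcongr; linarith
    _ < 1 := (lt_div_iff₀ (by positivity)).1 hDlt

theorem stmt_0_general (b : ℝ → ℝ) (hb : Continuous b) (hper : ∀ t, b (t + 1) = b t)
    (α : ℝ) (hint : (∫ s in (0:ℝ)..1, b s) = -α)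
    (β L : ℝ) (hβ : β ∈ Set.Ioo 0 α) (hL : 0 < L) :
    (∀ D : ℝ, 0 < D → ∀ t : ℝ,
        DeltaSol b α β L D (t + 1) = DeltaSol b α β L D t ∧
        0 < DeltaSol b α β L D t ∧
        HasDerivAt (DeltaSol b α β L D) ((b t + β) * DeltaSol b α β L D t + D * L) t) ∧
    ∃ D₀ > (0:ℝ), ∀ D : ℝ, 0 < D → D < D₀ →
      ∀ t ∈ Set.Icc (0:ℝ) 1, DeltaSol b α β L D t < 1 := by
  set f : ℝ → ℝ := fun x => b x + β
  have hf : Continuous f := hb.add continuous_const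
  have hfper : Function.Periodic f 1 := fun x => by simp only [f, hper]
  have hmean : ∀ t, (∫ x in t..(t + 1), f x) = β - α := fun t => by
    rw [hfper.intervalIntegral_add_eq t 0, zero_add,
      integral_add (hb.intervalIntegrable 0 1) intervalIntegrable_const, hint]
    simp only [intervalIntegral.integral_const, sub_zero, smul_eq_mul, one_mul]
    ring
  have hc : 0 < 1 - Real.exp (β - α) := sub_pos.2 (Real.exp_lt_one_iff.2 (by linarith [hβ.2]))
  have hΔ : ∀ D, DeltaSol b α β L D =
      fun t => D * (L / (1 - Real.exp (β - α)) * windowExpIntegral f 1 t) := fun D => by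
    funext t
    simp only [DeltaSol, windowExpIntegral, f]
    ring
  refine ⟨fun D hD t => ⟨?_, ?_, ?_⟩, ?_⟩
  · simp only [hΔ, windowExpIntegral_add_period hfper]
  · rw [hΔ]
    have := windowExpIntegral_pos hf one_pos t
    positivity
  · have hderiv := ((hasDerivAt_windowExpIntegral hf 1 t).const_mul
      (L / (1 - Real.exp (β - α)))).const_mul D
    rw [hfper t, hmean t] at hderiv
    rw [hΔ]
    refine hderiv.congr_deriv ?_
    field_simp
    ring
  · obtain ⟨D₀, hD₀, hsmall⟩ := exists_pos_forall_mul_lt_one_of_isCompact isCompact_Icc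
      ((continuous_windowExpIntegral hf 1).const_mul _).continuousOn
    exact ⟨D₀, hD₀, fun D hD hDlt t ht => by rw [hΔ]; exact hsmall D hD hDlt t ht⟩

theorem stmt_0 (b : ℝ → ℝ) (hb : Continuous b) (hper : ∀ t, b (t + 1) = b t)
    (α : ℝ) (hα : 0 < α) (hint : (∫ s in (0:ℝ)..1, b s) = -α)
    (β L : ℝ) (hβ : β ∈ Set.Ioo 0 α) (hL : 0 < L) :
    (∀ D : ℝ, 0 < D → ∀ t : ℝ,
        DeltaSol b α β L D (t + 1) = DeltaSol b α β L D t ∧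
        0 < DeltaSol b α β L D t ∧
        HasDerivAt (DeltaSol b α β L D) ((b t + β) * DeltaSol b α β L D t + D * L) t) ∧
    ∃ D₀ > (0:ℝ), ∀ D : ℝ, 0 < D → D < D₀ →
      ∀ t ∈ Set.Icc (0:ℝ) 1, DeltaSol b α β L D t < 1 :=
  stmt_0_general b hb hper α hint β L hβ hL
end

section
/- Let V : ℝ → ℝ^N be a solution of a linear system y' = A(t)y (with A continuous) satisfying α₋ := inf_t ‖V(t)‖ > 0 and α₊ := sup_t ‖V(t)‖ < ∞. Suppose ψ_t : ℝ^N → ℝ is a family of linear forms with |ψ_t(Y)| ≤ K‖Y‖ and the decomposition R(t;t')Y = -ψ_{t'}(Y)·R(t;t')𝟙 + E(t;t')Y where ‖E(t;t')Y‖ ≤ K·exp(-β(t-t'))·‖Y‖ for all t ≥ t'. If furthermore ‖R(t'+δ;t')𝟙‖ ≤ C_δ for a fixed δ > 0 chosen with K·α₊·exp(-βδ) < α₋, then |ψ_{t'}(V(t'))| ≥ (α₋ - α₊·K·exp(-βδ))/C_δ > 0 for all t' ∈ ℝ. In particular the normalized linear form L_{t'}(Y) := ψ_{t'}(Y)/ψ_{t'}(V(t'))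 is well-defined and satisfies |L_{t'}(Y)| ≤ K₁‖Y‖ for some K₁ > 0 independent of t'. -/
open Real

theorem stmt_6 (N : ℕ)
    (A : ℝ → ((Fin N → ℝ) →L[ℝ] (Fin N → ℝ))) (hA : Continuous A)
    (R : ℝ → ℝ → ((Fin N → ℝ) →L[ℝ] (Fin N → ℝ)))
    (hinit : ∀ t : ℝ, R t t = ContinuousLinearMap.id ℝ (Fin N → ℝ))
    (hode : ∀ t₀ s : ℝ, HasDerivAt (fun u => R u t₀) ((A s).comp (R s t₀)) s)
    (V : ℝ → Fin N → ℝ)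
    (hVsol : ∀ t : ℝ, HasDerivAt V ((A t) (V t)) t)
    (hVprop : ∀ t' t : ℝ, t' ≤ t → (R t t') (V t') = V t)
    (αm αp : ℝ) (hαm : 0 < αm) (hVlow : ∀ t, αm ≤ ‖V t‖) (hVup : ∀ t, ‖V t‖ ≤ αp)
    (ψ : ℝ → ((Fin N → ℝ) →L[ℝ] ℝ)) (K β : ℝ) (hK : 0 < K) (hβ : 0 < β)
    (hψbd : ∀ (t : ℝ) (Y : Fin N → ℝ), |ψ t Y| ≤ K * ‖Y‖)
    (hsplit : ∀ (t' t : ℝ), t' ≤ t → ∀ Y : Fin N → ℝ,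
      ‖(R t t') Y + ψ t' Y • ((R t t') (fun _ => (1:ℝ)))‖
        ≤ K * Real.exp (-β * (t - t')) * ‖Y‖)
    (δ : ℝ) (hδ : 0 < δ) (hgap : K * αp * Real.exp (-β * δ) < αm)
    (Cδ : ℝ) (hCδ : 0 < Cδ)
    (hC : ∀ t' : ℝ, ‖(R (t' + δ) t') (fun _ => (1:ℝ))‖ ≤ Cδ) :
    (∀ t' : ℝ, (αm - αp * K * Real.exp (-β * δ)) / Cδ ≤ |ψ t' (V t')|) ∧
    0 < (αm - αp * K * Real.exp (-β * δ)) / Cδ ∧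
    ∃ K₁ > (0:ℝ), ∀ (t' : ℝ) (Y : Fin N → ℝ),
      |ψ t' Y / ψ t' (V t')| ≤ K₁ * ‖Y‖ := by
  have hnum : 0 < αm - αp * K * Real.exp (-β * δ) := by nlinarith [hgap]
  have hc : 0 < (αm - αp * K * Real.exp (-β * δ)) / Cδ := div_pos hnum hCδ
  have hmain : ∀ t' : ℝ, (αm - αp * K * Real.exp (-β * δ)) / Cδ ≤ |ψ t' (V t')| := by
    intro t'
    have hle : t' ≤ t' + δ := by linarith
    have h1 := hsplit t' (t' + δ) hle (V t')
    rw [hVprop t' (t' + δ) hle] at h1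
    have h2 : -β * (t' + δ - t') = -β * δ := by ring
    rw [h2] at h1
    set E := ψ t' (V t') with hE
    set w := (R (t' + δ) t') (fun _ => (1:ℝ)) with hw
    have h3 : ‖V (t' + δ)‖ ≤ ‖V (t' + δ) + E • w‖ + ‖E • w‖ := by
      have h := norm_add_le (V (t' + δ) + E • w) (-(E • w))
      simpa [norm_neg] using h
    have h4 : ‖E • w‖ = |E| * ‖w‖ := by rw [norm_smul, Real.norm_eq_abs]
    have h5 : |E| * ‖w‖ ≤ |E| * Cδ := by
      apply mul_le_mul_of_nonneg_left (hC t') (abs_nonneg E)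
    have h6 : K * Real.exp (-β * δ) * ‖V t'‖ ≤ K * Real.exp (-β * δ) * αp := by
      apply mul_le_mul_of_nonneg_left (hVup t')
      positivity
    have h7 : αm ≤ K * Real.exp (-β * δ) * αp + |E| * Cδ := by
      have := hVlow (t' + δ)
      calc αm ≤ ‖V (t' + δ)‖ := this
        _ ≤ ‖V (t' + δ) + E • w‖ + ‖E • w‖ := h3
        _ ≤ K * Real.exp (-β * δ) * ‖V t'‖ + |E| * Cδ := by
            rw [h4] at *; linarith
        _ ≤ K * Real.exp (-β * δ) * αp + |E| * Cδ := by linarith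
    rw [div_le_iff₀ hCδ]
    nlinarith [h7]
  refine ⟨hmain, hc, ⟨K / ((αm - αp * K * Real.exp (-β * δ)) / Cδ), div_pos hK hc, ?_⟩⟩
  intro t' Y
  set c := (αm - αp * K * Real.exp (-β * δ)) / Cδ with hcdef
  have hψV : c ≤ |ψ t' (V t')| := hmain t'
  have hψVpos : 0 < |ψ t' (V t')| := lt_of_lt_of_le hc hψV
  rw [abs_div, div_le_iff₀ hψVpos]
  calc |ψ t' Y| ≤ K * ‖Y‖ := hψbd t' Y
    _ = K / c * ‖Y‖ * c := by field_simp
    _ ≤ K / c * ‖Y‖ * |ψ t' (V t')| := by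
        apply mul_le_mul_of_nonneg_left hψV
        positivity
end

section
/- Let b : ℝ → ℝ be continuous and 1-periodic with -α := ∫₀¹ b(s) ds < 0, let β ∈ (0, α), and let Δ : ℝ → ℝ be a strictly positive 1-periodic C¹ solution of Δ' = (b+β)Δ + DL (D, L > 0 constants). If u : [t', T] → ℝ is C¹ with |u(t')| < Δ(t') and u satisfies the differential inequality ±u'(t) < (b(t)+β)(±u(t)) + DL whenever ±u(t) > 0, then |u(t)| < Δ(t) for all t ∈ [t', T]. -/
open Real MeasureTheory intervalIntegral

lemma helper_neg_deriv (v : ℝ → ℝ) (dv s a : ℝ) (ha : a < s)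
    (hd : HasDerivAt v dv s) (hdv : dv < 0) (hvs : v s = 0)
    (hneg : ∀ t ∈ Set.Ico a s, v t < 0) : False := by
  have h := hasDerivAt_iff_tendsto_slope.mp hd
  have h2 : Filter.Tendsto (slope v s) (nhdsWithin s (Set.Iio s)) (nhds dv) :=
    h.mono_left (nhdsWithin_mono _ (fun x hx => ne_of_lt hx))
  have hev : ∀ᶠ t in nhdsWithin s (Set.Iio s), slope v s t < 0 :=
    h2.eventually (Iio_mem_nhds hdv)
  have hmem : Set.Ioo a s ∈ nhdsWithin s (Set.Iio s) := Ioo_mem_nhdsLT_of_mem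
    (by constructor <;> simp [ha, le_refl])
  have : Filter.NeBot (nhdsWithin s (Set.Iio s)) := by
    haveI : Nonempty (Set.Iio s) := ⟨⟨a, ha⟩⟩
    infer_instance
  obtain ⟨t, hts, htm⟩ := (hev.and (Filter.eventually_of_mem hmem (fun x hx => hx))).exists
  have hvt : v t < 0 := hneg t ⟨le_of_lt htm.1, htm.2⟩
  have hslope : 0 < slope v s t := by
    rw [slope_def_field]
    simp only [hvs]
    rw [div_pos_iff]
    right
    constructor
    · linarith
    · linarith [htm.2]
  linarith

theorem stmt_9 (b : ℝ → ℝ) (hb : Continuous b) (hper : ∀ t, b (t + 1) = b t)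
    (α : ℝ) (hα : 0 < α) (hint : (∫ s in (0:ℝ)..1, b s) = -α)
    (β : ℝ) (hβ : β ∈ Set.Ioo 0 α) (D L : ℝ) (hD : 0 < D) (hL : 0 < L)
    (Δ : ℝ → ℝ) (hΔpos : ∀ t, 0 < Δ t) (hΔper : ∀ t, Δ (t + 1) = Δ t)
    (hΔode : ∀ t, HasDerivAt Δ ((b t + β) * Δ t + D * L) t)
    (t' T : ℝ) (htT : t' ≤ T) (u du : ℝ → ℝ)
    (hu : ∀ t ∈ Set.Icc t' T, HasDerivAt u (du t) t)
    (hineqp : ∀ t ∈ Set.Icc t' T, 0 < u t → du t < (b t + β) * u t + D * L)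
    (hineqm : ∀ t ∈ Set.Icc t' T, 0 < -u t → -du t < (b t + β) * (-u t) + D * L)
    (hinit : |u t'| < Δ t') :
    ∀ t ∈ Set.Icc t' T, |u t| < Δ t := by
  by_contra hcon
  push_neg at hcon
  obtain ⟨t0, ht0, ht0ge⟩ := hcon
  -- the "bad" set
  set S : Set ℝ := Set.Icc t' T ∩ (fun t => |u t| - Δ t) ⁻¹' Set.Ici 0 with hSdef
  have hucont : ContinuousOn u (Set.Icc t' T) := fun t ht =>
    ((hu t ht).continuousAt).continuousWithinAt
  have hΔcont : Continuous Δ := by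
    have : ∀ t, ContinuousAt Δ t := fun t => (hΔode t).continuousAt
    exact continuous_iff_continuousAt.mpr this
  have hfcont : ContinuousOn (fun t => |u t| - Δ t) (Set.Icc t' T) :=
    (hucont.abs).sub hΔcont.continuousOn
  have hSclosed : IsClosed S :=
    hfcont.preimage_isClosed_of_isClosed isClosed_Icc isClosed_Ici
  have hSne : S.Nonempty := ⟨t0, ht0, by simp [Set.mem_preimage]; linarith⟩
  have hSbdd : BddBelow S := ⟨t', fun x hx => hx.1.1⟩
  set s := sInf S with hs
  have hsS : s ∈ S := hSclosed.csInf_mem hSne hSbdd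
  have hsIcc : s ∈ Set.Icc t' T := hsS.1
  have hsge : Δ s ≤ |u s| := by
    have := hsS.2
    simp only [Set.mem_preimage, Set.mem_Ici] at this
    linarith
  have ht'notS : t' ∉ S := by
    intro h
    have := h.2
    simp only [Set.mem_preimage, Set.mem_Ici] at this
    linarith
  have ht's : t' < s := lt_of_le_of_ne hsIcc.1 (fun h => ht'notS (h ▸ hsS))
  -- strict inequality before s
  have hbefore : ∀ t ∈ Set.Ico t' s, |u t| < Δ t := by
    intro t ht
    by_contra hge
    push_neg at hge
    have htS : t ∈ S := ⟨⟨ht.1, le_trans (le_of_lt ht.2) hsIcc.2⟩,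
      by simp only [Set.mem_preimage, Set.mem_Ici]; linarith⟩
    exact absurd (csInf_le hSbdd htS) (not_le.mpr ht.2)
  -- |u s| = Δ s by left continuity
  have hsle : |u s| ≤ Δ s := by
    have hcw : ContinuousWithinAt (fun t => |u t| - Δ t) (Set.Icc t' T) s :=
      hfcont s hsIcc
    have hmono : nhdsWithin s (Set.Ico t' s) ≤ nhdsWithin s (Set.Icc t' T) :=
      nhdsWithin_mono _ (fun x hx => ⟨hx.1, le_trans (le_of_lt hx.2) hsIcc.2⟩)
    have htend : Filter.Tendsto (fun t => |u t| - Δ t) (nhdsWithin s (Set.Ico t' s))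
        (nhds (|u s| - Δ s)) := hcw.tendsto.mono_left hmono
    have hne : (nhdsWithin s (Set.Ico t' s)).NeBot := by
      rw [← mem_closure_iff_nhdsWithin_neBot, closure_Ico (ne_of_lt ht's)]
      exact ⟨le_of_lt ht's, le_refl s⟩
    have : |u s| - Δ s ≤ 0 := le_of_tendsto htend
      (Filter.eventually_of_mem self_mem_nhdsWithin
        (fun t ht => by linarith [hbefore t ht]))
    linarith
  have habs : |u s| = Δ s := le_antisymm hsle hsge
  have hΔs : 0 < Δ s := hΔpos s
  rcases (abs_eq (le_of_lt hΔs)).mp habs with hcase | hcase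
  · -- u s = Δ s
    have hus : 0 < u s := hcase ▸ hΔs
    have hdu := hineqp s hsIcc hus
    have hd : HasDerivAt (fun t => u t - Δ t) (du s - ((b s + β) * Δ s + D * L)) s :=
      (hu s hsIcc).sub (hΔode s)
    refine helper_neg_deriv (fun t => u t - Δ t) _ s t' ht's hd ?_ (by simp [hcase]) ?_
    · rw [hcase] at hdu; linarith
    · intro t ht
      have := hbefore t ht
      have : u t ≤ |u t| := le_abs_self _
      linarith [hbefore t ht]
  · -- u s = -Δ s
    have hus : 0 < -u s := by rw [hcase]; linarith
    have hdu := hineqm s hsIcc hus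
    have hd : HasDerivAt (fun t => -u t - Δ t) (-du s - ((b s + β) * Δ s + D * L)) s :=
      ((hu s hsIcc).neg).sub (hΔode s)
    refine helper_neg_deriv (fun t => -u t - Δ t) _ s t' ht's hd ?_ (by simp [hcase]) ?_
    · have : -u s = Δ s := by rw [hcase]; ring
      rw [this] at hdu; linarith
    · intro t ht
      have h1 : -u t ≤ |u t| := neg_le_abs _
      linarith [hbefore t ht]
end

section
/- Let (Z_m)_m be a sequence of solutions on [t', ∞) of a fixed linear nonhomogeneous ODE Z' = B(t)Z + g(t) (B continuous matrix-valued, g continuous), and suppose there are constants K > 0, β > 0 and times t_m → ∞ such that ‖Z_m(t)‖ ≤ K·exp(-β(t-t')) for all t ∈ [t', t_m]. If in addition the initial conditions Z_m(t') are uniformly bounded, then there exists a subsequence with Z_{m_k}(t') converging to some Z₀, and the solution Z of the ODE with Z(t') = Z₀ satisfies ‖Z(t)‖ ≤ K·exp(-β(t-t')) for all t ≥ t'. -/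
/-!
Solutions of `x' = B(t) x + g(t)` depend Lipschitz-continuously on their initial value over every
compact interval `[t', b]` (Grönwall), so a subsequence whose initial values converge
(Bolzano–Weierstrass) converges uniformly on each `[t', b]`. Passing to the limit in the integral
equation shows that the limit is again a solution, and the bound `‖Z m t‖ ≤ K e^{-β(t-t')}`, which
holds at a fixed `t` as soon as `tm m ≥ t`, passes to the pointwise limit.
-/

open Real Filter Set Topology NNReal

variable {E : Type*} [NormedAddCommGroup E] [NormedSpace ℝ E]

def IsAffineODESolution (B : ℝ → E →L[ℝ] E) (g : ℝ → E) (t₀ : ℝ) (x : ℝ → E) : Prop :=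
  ∀ t ≥ t₀, HasDerivAt x (B t (x t) + g t) t

theorem TendstoUniformlyOn.clm_apply_of_norm_le {α ι F : Type*} [NormedAddCommGroup F]
    [NormedSpace ℝ F] {l : Filter ι} {S : Set α} {A : α → E →L[ℝ] F} {C : ℝ}
    (hA : ∀ s ∈ S, ‖A s‖ ≤ C) {x : ι → α → E} {V : α → E} (h : TendstoUniformlyOn x V l S) :
    TendstoUniformlyOn (fun k s => A s (x k s)) (fun s => A s (V s)) l S := by
  rw [Metric.tendstoUniformlyOn_iff] at h ⊢
  intro ε hε
  have hC : 0 < max C 0 + 1 := by positivity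
  filter_upwards [h (ε / (max C 0 + 1)) (div_pos hε hC)] with k hk s hs
  calc dist (A s (V s)) (A s (x k s)) ≤ ‖A s‖ * dist (V s) (x k s) := by
        rw [dist_eq_norm, dist_eq_norm, ← map_sub]
        exact (A s).le_opNorm _
    _ ≤ (max C 0 + 1) * dist (V s) (x k s) := by
        gcongr
        exact (hA s hs).trans ((le_max_left C 0).trans (le_add_of_nonneg_right zero_le_one))
    _ < (max C 0 + 1) * (ε / (max C 0 + 1)) := by gcongr; exact hk s hs
    _ = ε := mul_div_cancel₀ ε hC.ne'

theorem continuousOn_Ici_of_forall_Icc {α : Type*} [TopologicalSpace α] {f : ℝ → α} {a : ℝ}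
    (h : ∀ b, ContinuousOn f (Icc a b)) : ContinuousOn f (Ici a) := fun t ht =>
  (h (t + 1) t ⟨ht, by linarith⟩).mono_of_mem_nhdsWithin <| by
    rw [← Ici_inter_Iic]
    exact inter_mem_nhdsWithin _ (Iic_mem_nhds (by linarith))

namespace IsAffineODESolution

variable {B : ℝ → E →L[ℝ] E} {g : ℝ → E} {t₀ : ℝ} {x : ℝ → E}

theorem continuousOn (hx : IsAffineODESolution B g t₀ x) : ContinuousOn x (Ici t₀) :=
  fun t ht => (hx t ht).continuousAt.continuousWithinAt

theorem eq_add_integral [CompleteSpace E] (hB : Continuous B) (hg : Continuous g)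
    (hx : IsAffineODESolution B g t₀ x) {t : ℝ} (ht : t₀ ≤ t) :
    x t = x t₀ + ∫ s in t₀..t, B s (x s) + g s := by
  rw [intervalIntegral.integral_eq_sub_of_hasDerivAt
    (fun s hs => hx s (uIcc_of_le ht ▸ hs).1) ?_, add_sub_cancel]
  exact ((hB.continuousOn.clm_apply (hx.continuousOn.mono Icc_subset_Ici_self)).add
    hg.continuousOn).intervalIntegrable_of_Icc ht

end IsAffineODESolution

variable {B : ℝ → E →L[ℝ] E} {g : ℝ → E} {t₀ : ℝ}

theorem exists_dist_le_dist_mul_exp (hB : Continuous B) (t₀ b : ℝ) :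
    ∃ M : ℝ≥0, ∀ x y, IsAffineODESolution B g t₀ x → IsAffineODESolution B g t₀ y →
      ∀ t ∈ Icc t₀ b, dist (x t) (y t) ≤ dist (x t₀) (y t₀) * exp (M * (t - t₀)) := by
  obtain ⟨C, hC⟩ := isCompact_Icc.exists_bound_of_continuousOn (hB.continuousOn (s := Icc t₀ b))
  refine ⟨C.toNNReal, fun x y hx hy => ?_⟩
  have hlip : ∀ t ∈ Ico t₀ b, LipschitzOnWith C.toNNReal (fun z => B t z + g t) univ := by
    intro t ht
    refine (((B t).lipschitz.add (LipschitzWith.const (g t))).weaken ?_).lipschitzOnWith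
    rw [add_zero, ← NNReal.coe_le_coe, coe_nnnorm, Real.coe_toNNReal']
    exact (hC t (Ico_subset_Icc_self ht)).trans (le_max_left _ _)
  exact dist_le_of_trajectories_ODE_of_mem hlip (hx.continuousOn.mono Icc_subset_Ici_self)
    (fun t ht => (hx t ht.1).hasDerivWithinAt) (fun _ _ => trivial)
    (hy.continuousOn.mono Icc_subset_Ici_self) (fun t ht => (hy t ht.1).hasDerivWithinAt)
    (fun _ _ => trivial) le_rfl

theorem uniformCauchySeqOn_Icc_of_cauchySeq (hB : Continuous B) {x : ℕ → ℝ → E}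
    (hx : ∀ k, IsAffineODESolution B g t₀ (x k)) (h₀ : CauchySeq fun k => x k t₀) (b : ℝ) :
    UniformCauchySeqOn x atTop (Icc t₀ b) := by
  obtain ⟨M, hM⟩ := exists_dist_le_dist_mul_exp (g := g) hB t₀ b
  set L := exp (M * (b - t₀))
  have hL : 0 < L := exp_pos _
  rw [Metric.uniformCauchySeqOn_iff]
  intro ε hε
  obtain ⟨n, hn⟩ := Metric.cauchySeq_iff.mp h₀ (ε / L) (div_pos hε hL)
  refine ⟨n, fun p hp q hq t ht => ?_⟩
  calc dist (x p t) (x q t) ≤ dist (x p t₀) (x q t₀) * exp (M * (t - t₀)) :=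
        hM _ _ (hx p) (hx q) t ht
    _ ≤ dist (x p t₀) (x q t₀) * L := by
        gcongr
        exact exp_le_exp.2 (by gcongr; exact ht.2)
    _ < ε / L * L := by
        gcongr
        exact hn p hp q hq
    _ = ε := div_mul_cancel₀ ε hL.ne'

variable [CompleteSpace E]

theorem exists_tendstoUniformlyOn_Icc_of_cauchySeq (hB : Continuous B) {x : ℕ → ℝ → E}
    (hx : ∀ k, IsAffineODESolution B g t₀ (x k)) (h₀ : CauchySeq fun k => x k t₀) :
    ∃ V : ℝ → E, ∀ b, TendstoUniformlyOn x V atTop (Icc t₀ b) := by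
  have hC := uniformCauchySeqOn_Icc_of_cauchySeq hB hx h₀
  refine ⟨fun t => limUnder atTop fun k => x k t, fun b =>
    (hC b).tendstoUniformlyOn_of_tendsto fun t ht => ?_⟩
  exact ((hC b).cauchySeq ht).tendsto_limUnder

theorem exists_isAffineODESolution_eqOn_of_integral_eq (hB : Continuous B) (hg : Continuous g)
    {V : ℝ → E} (hV : ContinuousOn V (Ici t₀))
    (hint : ∀ t ≥ t₀, V t = V t₀ + ∫ s in t₀..t, B s (V s) + g s) :
    ∃ W, IsAffineODESolution B g t₀ W ∧ EqOn W V (Ici t₀) := by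
  set f : ℝ → E := fun s => B s (V s) + g s
  -- freezing the integrand to the left of `t₀` makes `W` differentiable at `t₀` itself
  set F : ℝ → E := fun s => f (max s t₀)
  have hF : Continuous F := ((hB.continuousOn.clm_apply hV).add hg.continuousOn).comp_continuous
    (continuous_id.max continuous_const) fun s => le_max_right s t₀
  have hFf : ∀ t ≥ t₀, ∫ s in t₀..t, F s = ∫ s in t₀..t, f s := fun t ht =>
    intervalIntegral.integral_congr fun s hs => by
      simp only [F, max_eq_left (uIcc_of_le ht ▸ hs).1]
  have hWV : EqOn (fun t => V t₀ + ∫ s in t₀..t, F s) V (Ici t₀) := fun t ht => by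
    simp only [hFf t ht, ← hint t ht]
  refine ⟨_, fun t ht => ?_, hWV⟩
  have hFt : F t = B t (V t) + g t := by simp only [F, f, max_eq_left ht]
  rw [show V t₀ + ∫ s in t₀..t, F s = V t from hWV ht, ← hFt]
  exact (intervalIntegral.integral_hasDerivAt_right (hF.intervalIntegrable _ _)
    (hF.stronglyMeasurableAtFilter _ _) hF.continuousAt).const_add _

theorem exists_isAffineODESolution_eqOn_of_tendstoUniformlyOn (hB : Continuous B)
    (hg : Continuous g) {ι : Type*} {l : Filter ι} [l.NeBot] [l.IsCountablyGenerated]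
    {x : ι → ℝ → E} (hx : ∀ k, IsAffineODESolution B g t₀ (x k)) {V : ℝ → E}
    (hV : ∀ b, TendstoUniformlyOn x V l (Icc t₀ b)) :
    ∃ W, IsAffineODESolution B g t₀ W ∧ EqOn W V (Ici t₀) := by
  have hxc : ∀ k b, ContinuousOn (x k) (Icc t₀ b) := fun k b =>
    (hx k).continuousOn.mono Icc_subset_Ici_self
  have hVc : ContinuousOn V (Ici t₀) := continuousOn_Ici_of_forall_Icc fun b =>
    (hV b).continuousOn (Frequently.of_forall fun k => hxc k b)
  refine exists_isAffineODESolution_eqOn_of_integral_eq hB hg hVc fun t ht => ?_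
  obtain ⟨C, hC⟩ := isCompact_Icc.exists_bound_of_continuousOn (hB.continuousOn (s := Icc t₀ t))
  have hlim : Tendsto (fun k => x k t₀ + ∫ s in t₀..t, B s (x k s) + g s) l
      (𝓝 (V t₀ + ∫ s in t₀..t, B s (V s) + g s)) := by
    refine ((hV t).tendsto_at (left_mem_Icc.2 ht)).add ?_
    have hxt := fun k => hxc k t
    have hVt := hV t
    rw [← uIcc_of_le ht] at hC hxt hVt
    refine TendstoUniformlyOn.tendsto_intervalIntegral_of_continuousOn
      (Eventually.of_forall fun k => (hB.continuousOn.clm_apply (hxt k)).add hg.continuousOn) ?_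
    exact (hVt.clm_apply_of_norm_le hC).add <| Metric.tendstoUniformlyOn_iff.2 fun ε hε =>
      Eventually.of_forall fun k s _ => by simpa using hε
  refine tendsto_nhds_unique ?_ hlim
  exact ((hV t).tendsto_at (right_mem_Icc.2 ht)).congr fun k => (hx k).eq_add_integral hB hg ht

theorem exists_isAffineODESolution_tendsto_of_cauchySeq (hB : Continuous B) (hg : Continuous g)
    {x : ℕ → ℝ → E} (hx : ∀ k, IsAffineODESolution B g t₀ (x k))
    (h₀ : CauchySeq fun k => x k t₀) :
    ∃ W, IsAffineODESolution B g t₀ W ∧ ∀ t ≥ t₀, Tendsto (fun k => x k t) atTop (𝓝 (W t)) := by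
  obtain ⟨V, hV⟩ := exists_tendstoUniformlyOn_Icc_of_cauchySeq hB hx h₀
  obtain ⟨W, hW, hWV⟩ := exists_isAffineODESolution_eqOn_of_tendstoUniformlyOn hB hg hx hV
  exact ⟨W, hW, fun t ht => hWV ht ▸ (hV t).tendsto_at (right_mem_Icc.2 ht)⟩

theorem stmt_12_general (N : ℕ)
    (B : ℝ → ((Fin N → ℝ) →L[ℝ] (Fin N → ℝ))) (hB : Continuous B)
    (g : ℝ → Fin N → ℝ) (hg : Continuous g)
    (t' K β : ℝ)
    (Z : ℕ → ℝ → Fin N → ℝ)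
    (hsol : ∀ m, ∀ t ≥ t', HasDerivAt (Z m) ((B t) (Z m t) + g t) t)
    (tm : ℕ → ℝ) (htm : Tendsto tm atTop atTop)
    (hbd : ∀ m, ∀ t ∈ Set.Icc t' (tm m), ‖Z m t‖ ≤ K * Real.exp (-β * (t - t')))
    (Cb : ℝ) (hinit : ∀ m, ‖Z m t'‖ ≤ Cb) :
    ∃ (φ : ℕ → ℕ), StrictMono φ ∧
      ∃ Z₀ : Fin N → ℝ,
        Tendsto (fun k => Z (φ k) t') atTop (nhds Z₀) ∧
        ∃ W : ℝ → Fin N → ℝ, W t' = Z₀ ∧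
          (∀ t ≥ t', HasDerivAt W ((B t) (W t) + g t) t) ∧
          ∀ t ≥ t', ‖W t‖ ≤ K * Real.exp (-β * (t - t')) := by
  obtain ⟨Z₀, -, φ, hφ, hZ₀⟩ := tendsto_subseq_of_bounded (Metric.isBounded_closedBall (x := 0))
    fun m => mem_closedBall_zero_iff.2 (hinit m)
  obtain ⟨W, hW, hZW⟩ :=
    exists_isAffineODESolution_tendsto_of_cauchySeq hB hg (fun k => hsol (φ k)) hZ₀.cauchySeq
  refine ⟨φ, hφ, Z₀, hZ₀, W, tendsto_nhds_unique (hZW t' le_rfl) hZ₀, hW, fun t ht => ?_⟩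
  refine le_of_tendsto (hZW t ht).norm ?_
  filter_upwards [(htm.comp hφ.tendsto_atTop).eventually_ge_atTop t] with k hk
  exact hbd (φ k) t ⟨ht, hk⟩

theorem stmt_12 (N : ℕ)
    (B : ℝ → ((Fin N → ℝ) →L[ℝ] (Fin N → ℝ))) (hB : Continuous B)
    (g : ℝ → Fin N → ℝ) (hg : Continuous g)
    (t' K β : ℝ) (hK : 0 < K) (hβ : 0 < β)
    (Z : ℕ → ℝ → Fin N → ℝ)
    (hsol : ∀ m, ∀ t ≥ t', HasDerivAt (Z m) ((B t) (Z m t) + g t) t)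
    (tm : ℕ → ℝ) (htm : Tendsto tm atTop atTop)
    (hbd : ∀ m, ∀ t ∈ Set.Icc t' (tm m), ‖Z m t‖ ≤ K * Real.exp (-β * (t - t')))
    (Cb : ℝ) (hinit : ∀ m, ‖Z m t'‖ ≤ Cb) :
    ∃ (φ : ℕ → ℕ), StrictMono φ ∧
      ∃ Z₀ : Fin N → ℝ,
        Tendsto (fun k => Z (φ k) t') atTop (nhds Z₀) ∧
        ∃ W : ℝ → Fin N → ℝ, W t' = Z₀ ∧
          (∀ t ≥ t', HasDerivAt W ((B t) (W t) + g t) t) ∧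
          ∀ t ≥ t', ‖W t‖ ≤ K * Real.exp (-β * (t - t')) :=
  stmt_12_general N B hB g hg t' K β Z hsol tm htm hbd Cb hinit
end
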